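/- arXiv:math-ph/0701066 — 5 statements merged into one kernel-verified Lean document; each statement's English description precedes it below -/
import Mathlib

section
/- Let (X, 𝓑, μ) be a finite measure space and τ : X → X a measurable map such that μ∘τ^{-1} ≪ μ, with Radon–Nikodym derivative φ = d(μ∘τ^{-1})/dμ assumed μ-essentially bounded. Suppose E₁, …, E_k are pairwise disjoint measurable sets whose union is τ(X), and σ₁, …, σ_k : X → X are measurable maps such that σ_i(τ(x)) = x for every x ∈ X with τ(x) ∈ E_i. Then for all f₁, f₂ ∈ L²(μ) (real-valued): ∫_X f₁ · (f₂∘τ) dμ = ∑_{i=1}^k ∫_{E_i} (f₁∘σ_i) · f₂ · φ dμ. In other words, the adjoint of the composition operator C_τ : f ↦ f∘τ on L²(μ) is given on E_i by (C_τ*f)(x) = φ(x) f(σ_i(x)). -/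
/-!
Since `τ` takes values in `⋃ i, E i`, the sets `τ ⁻¹' E i` partition `X`, and on `τ ⁻¹' E i` we may
write `f₁ = f₁ ∘ σ i ∘ τ`. The integral over `τ ⁻¹' E i` is therefore the integral of
`(f₁ ∘ σ i) · f₂` over `E i` against `μ ∘ τ⁻¹`, i.e. against `φ μ`. Integrability comes from
`μ ∘ τ⁻¹ ≤ C μ`, which keeps `f₂ ∘ τ` in `L²(μ)`. The only delicate point is measurability of
`f₁ ∘ σ i`, where `f₁` is merely defined `μ`-a.e.: pushing `μ ∘ τ⁻¹` restricted to `E i` forward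
by `σ i` gives back `μ` restricted to `τ ⁻¹' E i`.
-/

open MeasureTheory ENNReal

namespace MeasureTheory

variable {X Y : Type*} [MeasurableSpace X] [MeasurableSpace Y]

theorem Measure.le_smul_of_rnDeriv_le {μ ν : Measure X} [ν.HaveLebesgueDecomposition μ]
    (hνμ : ν ≪ μ) {c : ℝ≥0∞} (hc : ν.rnDeriv μ ≤ᵐ[μ] fun _ => c) : ν ≤ c • μ :=
  calc ν = μ.withDensity (ν.rnDeriv μ) := (Measure.withDensity_rnDeriv_eq ν μ hνμ).symm
    _ ≤ μ.withDensity fun _ => c := withDensity_mono hc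
    _ = c • μ := withDensity_const c

theorem Measure.rnDeriv_le_ofReal_of_toReal_le {μ ν : Measure X} [SigmaFinite ν]
    {C : ℝ} (hC : ∀ᵐ x ∂μ, (ν.rnDeriv μ x).toReal ≤ C) :
    ν.rnDeriv μ ≤ᵐ[μ] fun _ => ENNReal.ofReal C := by
  filter_upwards [hC, Measure.rnDeriv_lt_top ν μ] with x hx hx_top
  rw [← ENNReal.ofReal_toReal hx_top.ne]
  exact ENNReal.ofReal_le_ofReal hx

theorem Measure.map_restrict_map_of_leftInvOn {μ : Measure X} {τ : X → Y} {σ : Y → X} {E : Set Y}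
    (hτ : Measurable τ) (hσ : Measurable σ) (hE : MeasurableSet E)
    (hστ : Set.LeftInvOn σ τ (τ ⁻¹' E)) : ((μ.map τ).restrict E).map σ = μ.restrict (τ ⁻¹' E) := by
  have h_id : σ ∘ τ =ᵐ[μ.restrict (τ ⁻¹' E)] id :=
    (ae_restrict_mem (hτ hE)).mono fun x hx => hστ hx
  rw [Measure.restrict_map hτ hE, Measure.map_map hσ hτ, Measure.map_congr h_id, Measure.map_id]

theorem AEStronglyMeasurable.comp_restrict_map_of_leftInvOn {μ : Measure X} {τ : X → Y}
    {σ : Y → X} {E : Set Y} (hτ : Measurable τ) (hσ : Measurable σ) (hE : MeasurableSet E)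
    (hστ : Set.LeftInvOn σ τ (τ ⁻¹' E)) {β : Type*} [TopologicalSpace β] {f : X → β}
    (hf : AEStronglyMeasurable f μ) : AEStronglyMeasurable (f ∘ σ) ((μ.map τ).restrict E) := by
  refine AEStronglyMeasurable.comp_aemeasurable ?_ hσ.aemeasurable
  rw [Measure.map_restrict_map_of_leftInvOn hτ hσ hE hστ]
  exact hf.restrict

theorem setIntegral_preimage_mul_comp_of_leftInvOn {μ : Measure X} {τ : X → Y} {σ : Y → X}
    {E : Set Y} (hτ : Measurable τ) (hσ : Measurable σ) (hE : MeasurableSet E)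
    (hστ : Set.LeftInvOn σ τ (τ ⁻¹' E)) {f : X → ℝ} {g : Y → ℝ} (hf : AEStronglyMeasurable f μ)
    (hg : AEStronglyMeasurable g (μ.map τ)) :
    ∫ x in τ ⁻¹' E, f x * g (τ x) ∂μ = ∫ y in E, f (σ y) * g y ∂(μ.map τ) := by
  have hfg : AEStronglyMeasurable (fun y => f (σ y) * g y) ((μ.map τ).restrict E) :=
    (hf.comp_restrict_map_of_leftInvOn hτ hσ hE hστ).mul hg.restrict
  rw [Measure.restrict_map hτ hE] at hfg ⊢
  rw [integral_map hτ.aemeasurable hfg]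
  exact setIntegral_congr_fun (hτ hE) fun x hx => by rw [hστ hx]

end MeasureTheory

/-- Adjoint formula for a composition operator associated to a
finite-type measurable endomorphism `τ` with `μ ∘ τ⁻¹ ≪ μ` and essentially bounded
Radon–Nikodym derivative `φ = d(μ∘τ⁻¹)/dμ`: for `f₁, f₂ ∈ L²(μ)`,
`∫ f₁ · (f₂ ∘ τ) dμ = ∑ᵢ ∫_{Eᵢ} (f₁ ∘ σᵢ) · f₂ · φ dμ`. -/
theorem stmt1 {X : Type*} [MeasurableSpace X] (μ : Measure X) [IsFiniteMeasure μ]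
    (τ : X → X) (hτ : Measurable τ) (hac : μ.map τ ≪ μ)
    (φ : X → ℝ) (hφ : φ = fun x => ((μ.map τ).rnDeriv μ x).toReal)
    (hbd : ∃ C : ℝ, ∀ᵐ x ∂μ, φ x ≤ C)
    (k : ℕ) (E : Fin k → Set X) (hE : ∀ i, MeasurableSet (E i))
    (hdisj : Pairwise (Function.onFun Disjoint E))
    (hcover : (⋃ i, E i) = τ '' Set.univ)
    (σ : Fin k → X → X) (hσm : ∀ i, Measurable (σ i))
    (hσ : ∀ i x, τ x ∈ E i → σ i (τ x) = x)
    (f₁ f₂ : X → ℝ) (hf₁ : MemLp f₁ 2 μ) (hf₂ : MemLp f₂ 2 μ) :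
    ∫ x, f₁ x * f₂ (τ x) ∂μ = ∑ i, ∫ x in E i, f₁ (σ i x) * f₂ x * φ x ∂μ := by
  subst hφ
  obtain ⟨C, hC⟩ := hbd
  have hle : μ.map τ ≤ ENNReal.ofReal C • μ :=
    Measure.le_smul_of_rnDeriv_le hac (Measure.rnDeriv_le_ofReal_of_toReal_le hC)
  have hint : Integrable (fun x => f₁ x * f₂ (τ x)) μ :=
    hf₁.integrable_mul ((hf₂.of_measure_le_smul ofReal_ne_top hle).comp_of_map hτ.aemeasurable)
  have hpartition : (⋃ i, τ ⁻¹' E i) = Set.univ := by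
    rw [← Set.preimage_iUnion, hcover, Set.preimage_image_univ]
  calc ∫ x, f₁ x * f₂ (τ x) ∂μ = ∑ i, ∫ x in τ ⁻¹' E i, f₁ x * f₂ (τ x) ∂μ := by
        rw [← integral_iUnion_fintype (fun i => hτ (hE i)) (fun i j hij => (hdisj hij).preimage τ)
          (fun i => hint.integrableOn), hpartition, Measure.restrict_univ]
    _ = ∑ i, ∫ y in E i, f₁ (σ i y) * f₂ y ∂(μ.map τ) := Finset.sum_congr rfl fun i _ =>
        setIntegral_preimage_mul_comp_of_leftInvOn hτ (hσm i) (hE i) (fun x hx => hσ i x hx)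
          hf₁.1 (hf₂.1.mono_ac hac)
    _ = ∑ i, ∫ x in E i, f₁ (σ i x) * f₂ x * ((μ.map τ).rnDeriv μ x).toReal ∂μ := by
        refine Finset.sum_congr rfl fun i _ => ?_
        rw [← setIntegral_toReal_rnDeriv_mul hac (hE i)]
        simp_rw [mul_comm]
end

section
/- Let (Y, d) be a nonempty complete metric space and τ₁, …, τ_N : Y → Y contractions with constants c_i ∈ (0,1). Let Ω = {1,…,N}^ℕ with prepending maps σ_j(ω) = (jω₁ω₂…), and let π : Ω → Y be a continuous map satisfying π∘σ_j = τ_j∘π for all j (the encoding map of the IFS). Let p₁, …, p_N ∈ [0,1] with ∑_i p_i = 1, and let P_{(p)} be the infinite-product probability measure on Ω whose coordinates are i.i.d. with distribution (p₁, …, p_N). Then the pushforward measure μ_{(p)} := P_{(p)}∘π^{-1} on Y is a probability measure satisfying the equilibrium (Hutchinson) identity μ_{(p)} = ∑_{i=1}^N p_i · μ_{(p)}∘τ_i^{-1}. -/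
open MeasureTheory ENNReal

/-- The prepending shift `σ_j` on infinite words: `σ_j(ω₁ω₂…) = (j ω₁ ω₂ …)`. -/
def prependShift {N : ℕ} (j : Fin N) (ω : ℕ → Fin N) : ℕ → Fin N :=
  fun n => Nat.casesOn n j fun k => ω k

/-- For a contractive IFS `(τᵢ)` with encoding map `π` and weights
`p₁,…,p_N` summing to `1`, the pushforward `μ_{(p)} = P_{(p)} ∘ π⁻¹` of the
infinite-product Bernoulli measure `P_{(p)}` under `π` is a probability measure
satisfying the Hutchinson equilibrium identity `μ_{(p)} = ∑ᵢ pᵢ · μ_{(p)} ∘ τᵢ⁻¹`. -/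
theorem stmt3 {Y : Type*} [MetricSpace Y] [CompleteSpace Y] [Nonempty Y]
    [MeasurableSpace Y] [BorelSpace Y]
    (N : ℕ) (hN : 1 ≤ N) (τ : Fin N → Y → Y) (c : Fin N → ℝ)
    (hc : ∀ i, c i ∈ Set.Ioo (0 : ℝ) 1)
    (hτ : ∀ i x y, dist (τ i x) (τ i y) ≤ c i * dist x y)
    (π : (ℕ → Fin N) → Y) (hπcont : Continuous π)
    (hπeq : ∀ j : Fin N, π ∘ prependShift j = τ j ∘ π)
    (p : Fin N → ℝ≥0∞) (hp1 : ∀ i, p i ≤ 1) (hp : ∑ i, p i = 1)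
    (P : Measure (ℕ → Fin N)) [IsProbabilityMeasure P]
    (hP : ∀ (n : ℕ) (w : Fin n → Fin N),
      P {ω | ∀ k : Fin n, ω k = w k} = ∏ k, p (w k)) :
    IsProbabilityMeasure (P.map π) ∧
      P.map π = ∑ i, p i • (P.map π).map (τ i) := by
  classical
  have hπm : Measurable π := hπcont.measurable
  have hσm : ∀ j : Fin N, Measurable (prependShift j) := by
    intro j
    apply measurable_pi_lambda
    intro n
    cases n with
    | zero => exact measurable_const
    | succ k => exact measurable_pi_apply k
  have hτm : ∀ i : Fin N, Measurable (τ i) := by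
    intro i
    have hlip : LipschitzWith (Real.toNNReal (c i)) (τ i) := by
      apply LipschitzWith.of_dist_le_mul
      intro x y
      rw [Real.coe_toNNReal _ (hc i).1.le]
      exact hτ i x y
    exact hlip.continuous.measurable
  -- point cylinders are measurable
  have hcylm : ∀ (n : ℕ) (w : Fin n → Fin N),
      MeasurableSet {ω : ℕ → Fin N | ∀ k : Fin n, ω k = w k} := by
    intro n w
    have h : {ω : ℕ → Fin N | ∀ k : Fin n, ω k = w k}
        = ⋂ k : Fin n, (fun ω : ℕ → Fin N => ω (k : ℕ)) ⁻¹' {w k} := by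
      ext ω; simp
    rw [h]
    exact MeasurableSet.iInter fun k =>
      (measurable_pi_apply (k : ℕ)) (measurableSet_singleton _)
  set ν : Measure (ℕ → Fin N) := ∑ i, p i • P.map (prependShift i) with hν
  have hν_apply : ∀ s : Set (ℕ → Fin N), MeasurableSet s →
      ν s = ∑ i, p i * P ((prependShift i) ⁻¹' s) := by
    intro s hs
    rw [hν]
    simp only [Measure.coe_finset_sum, Finset.sum_apply, Measure.smul_apply, smul_eq_mul]
    refine Finset.sum_congr rfl fun i _ => ?_
    rw [Measure.map_apply (hσm i) hs]
  -- value of ν on point cylinders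
  have hνcyl : ∀ (n : ℕ) (w : Fin n → Fin N),
      ν {ω | ∀ k : Fin n, ω k = w k} = ∏ k, p (w k) := by
    intro n w
    rw [hν_apply _ (hcylm n w)]
    cases n with
    | zero =>
        have huniv : {ω : ℕ → Fin N | ∀ k : Fin 0, ω k = w k} = Set.univ := by
          ext ω; simp [Fin.elim0]
        simp [huniv, hp]
    | succ m =>
        have hpre : ∀ i : Fin N,
            (prependShift i) ⁻¹' {ω : ℕ → Fin N | ∀ k : Fin (m+1), ω k = w k}
              = if i = w 0 then {ω : ℕ → Fin N | ∀ k : Fin m, ω k = w k.succ} else ∅ := by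
          intro i
          by_cases hi : i = w 0
          · rw [if_pos hi]
            ext ω
            simp only [Set.mem_preimage, Set.mem_setOf_eq]
            constructor
            · intro h k
              exact h k.succ
            · intro h k
              induction k using Fin.cases with
              | zero => exact hi
              | succ j => exact h j
          · rw [if_neg hi]
            ext ω
            simp only [Set.mem_preimage, Set.mem_setOf_eq, Set.mem_empty_iff_false, iff_false]
            intro h
            exact hi (h 0)
        simp_rw [hpre]
        have hsum : ∑ i, p i * P (if i = w 0
              then {ω : ℕ → Fin N | ∀ k : Fin m, ω k = w k.succ} else ∅)
            = ∑ i, if i = w 0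
              then p i * P {ω : ℕ → Fin N | ∀ k : Fin m, ω k = w k.succ} else 0 := by
          refine Finset.sum_congr rfl fun i _ => ?_
          by_cases hi : i = w 0 <;> simp [hi]
        rw [hsum, Finset.sum_ite_eq' Finset.univ (w 0)]
        simp only [Finset.mem_univ, if_pos]
        rw [hP m (fun k => w k.succ), Fin.prod_univ_succ]
  -- value of any measure with the point-cylinder property on general cylinders
  have key : ∀ (Q : Measure (ℕ → Fin N)),
      (∀ (n : ℕ) (w : Fin n → Fin N), Q {ω | ∀ k : Fin n, ω k = w k} = ∏ k, p (w k)) →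
      ∀ (n : ℕ) (T : Set (Fin n → Fin N)),
        Q {ω : ℕ → Fin N | (fun k : Fin n => ω (k : ℕ)) ∈ T}
          = ∑ v ∈ (Set.toFinite T).toFinset, ∏ k, p (v k) := by
    intro Q hQ n T
    have hdec : {ω : ℕ → Fin N | (fun k : Fin n => ω (k : ℕ)) ∈ T}
        = ⋃ v ∈ (Set.toFinite T).toFinset, {ω : ℕ → Fin N | ∀ k : Fin n, ω k = v k} := by
      ext ω
      simp only [Set.mem_setOf_eq, Set.mem_iUnion, Set.Finite.mem_toFinset, exists_prop]
      constructor
      · intro h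
        exact ⟨_, h, fun k => rfl⟩
      · rintro ⟨v, hv, hvk⟩
        have hfe : (fun k : Fin n => ω (k : ℕ)) = v := funext hvk
        rwa [hfe]
    rw [hdec, measure_biUnion_finset ?_ (fun v _ => hcylm n v)]
    · exact Finset.sum_congr rfl fun v _ => hQ n v
    · intro v hv u hu hvu
      simp only [Function.onFun]
      rw [Set.disjoint_left]
      intro ω hω1 hω2
      exact hvu (funext fun k => (hω1 k).symm.trans (hω2 k))
  -- P = ν by uniqueness on the cylinder π-system
  have hPν : P = ν := by
    refine ext_of_generate_finite (measurableCylinders (fun _ : ℕ => Fin N))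
      generateFrom_measurableCylinders.symm isPiSystem_measurableCylinders ?_ ?_
    · intro t ht
      obtain ⟨s, S, hS, rfl⟩ := (mem_measurableCylinders t).mp ht
      set n : ℕ := s.sup id + 1 with hn
      have hlt : ∀ i : ℕ, i ∈ s → i < n := by
        intro i hi
        exact Nat.lt_succ_of_le (Finset.le_sup (f := id) hi)
      set e : (Fin n → Fin N) → (∀ i : s, Fin N) :=
        fun v i => v ⟨(i : ℕ), hlt i i.2⟩ with he
      have hcyl : cylinder s S
          = {ω : ℕ → Fin N | (fun k : Fin n => ω (k : ℕ)) ∈ e ⁻¹' S} := rfl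
      rw [hcyl, key P hP n (e ⁻¹' S), key ν hνcyl n (e ⁻¹' S)]
    · have h0 : (Set.univ : Set (ℕ → Fin N))
          = {ω : ℕ → Fin N | ∀ k : Fin 0, ω k = Fin.elim0 k} := by
        ext ω; simp [Fin.elim0]
      rw [h0, hP 0, hνcyl 0]
  have hprob : IsProbabilityMeasure (P.map π) :=
    Measure.isProbabilityMeasure_map hπm.aemeasurable
  refine ⟨hprob, ?_⟩
  ext s hs
  rw [Measure.map_apply hπm hs]
  conv_lhs => rw [hPν]
  rw [hν_apply _ (hπm hs)]
  simp only [Measure.coe_finset_sum, Finset.sum_apply, Measure.smul_apply, smul_eq_mul]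
  refine Finset.sum_congr rfl fun i _ => ?_
  congr 1
  rw [Measure.map_apply (hτm i) hs, Measure.map_apply hπm ((hτm i) hs)]
  have : prependShift i ⁻¹' (π ⁻¹' s) = (π ∘ prependShift i) ⁻¹' s := rfl
  rw [this, hπeq i]
  rfl
end

section
/- Let λ = (√5 − 1)/2 (so λ² + λ = 1, and λ²/(1−λ) = 1, λ/(1−λ) = 1/λ). Then μ_λ([λ, λ/(1−λ)]) = 2/3, and the equilibrium measure of the overlap is μ_λ( τ₀(X_λ) ∩ τ₁(X_λ) ) = μ_λ([λ, λ²/(1−λ)]) = μ_λ([λ, 1]) = 1/3. -/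
open MeasureTheory Set ENNReal

/-!
Writing `σ` for the shift, the coding map satisfies `π(ω) = λ ω₀ + λ π(σω)`, and under the
fair-coin measure `ω₀` is independent of `σω`, which is again fair-coin distributed. Hence
`μ(A) = ½ μ(τ₁⁻¹ A) + ½ μ(τ₀⁻¹ A)`. When `λ² + λ = 1`, on the attractor `[0, 1/λ]` the preimages
of the half-lines `[λ, ∞)`, `[1, ∞)`, `(λ, ∞)`, `(1, ∞)` under `τ₀, τ₁` are again half-lines of
this kind, `∅`, `(0, ∞)`, `[1/λ, ∞)` or everything. Since `μ(0, ∞) = 1` and `μ[1/λ, ∞) = 0` (both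
solve `x = ½ + ½ x`, resp. `x = ½ x`), this gives the closed systems `a = ½ + ½ b, b = ½ a` for
`a = μ[λ, ∞), b = μ[1, ∞)` and `d = ½ + ½ c, c = ½ d` for `d = μ(λ, ∞), c = μ(1, ∞)`. Thus
`μ[λ, 1/λ] = a = 2/3` and `μ[λ, 1] = a - c = 1/3`.
-/

section PrefixCylinder

variable {α : Type*}

def prefixCylinder (n : ℕ) (w : Fin n → α) : Set (ℕ → α) :=
  {ω | ∀ k : Fin n, ω k = w k}

def prefixCylinders (α : Type*) : Set (Set (ℕ → α)) :=
  {S | ∃ n w, S = prefixCylinder n w}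

@[simp]
lemma prefixCylinder_zero (w : Fin 0 → α) : prefixCylinder 0 w = univ :=
  eq_univ_of_forall fun _ k => k.elim0

lemma prefixCylinder_subset_of_le {n m : ℕ} {w : Fin n → α} {v : Fin m → α} {ω₀ : ℕ → α}
    (hnm : n ≤ m) (hw : ω₀ ∈ prefixCylinder n w) (hv : ω₀ ∈ prefixCylinder m v) :
    prefixCylinder m v ⊆ prefixCylinder n w := fun ω hω k => by
  rw [← hw k, hω ⟨k, k.2.trans_le hnm⟩, hv ⟨k, k.2.trans_le hnm⟩]

lemma isPiSystem_prefixCylinders : IsPiSystem (prefixCylinders α) := by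
  rintro _ ⟨n, w, rfl⟩ _ ⟨m, v, rfl⟩ ⟨ω₀, hw, hv⟩
  rcases le_total n m with hnm | hmn
  · exact ⟨m, v, inter_eq_right.2 (prefixCylinder_subset_of_le hnm hw hv)⟩
  · exact ⟨n, w, inter_eq_left.2 (prefixCylinder_subset_of_le hmn hv hw)⟩

variable [MeasurableSpace α] [MeasurableSingletonClass α]

lemma measurableSet_prefixCylinder (n : ℕ) (w : Fin n → α) :
    MeasurableSet (prefixCylinder n w) := by
  have h : prefixCylinder n w = ⋂ k : Fin n, (fun ω : ℕ → α => ω k) ⁻¹' {w k} := by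
    ext; simp [prefixCylinder]
  rw [h]
  exact .iInter fun k => measurable_pi_apply _ (measurableSet_singleton _)

lemma generateFrom_prefixCylinders [Countable α] :
    MeasurableSpace.generateFrom (prefixCylinders α) = MeasurableSpace.pi := by
  refine le_antisymm (MeasurableSpace.generateFrom_le ?_) (iSup_le fun k => ?_)
  · rintro _ ⟨n, w, rfl⟩
    exact measurableSet_prefixCylinder n w
  refine measurable_iff_comap_le.1 (@measurable_to_countable' _ _ _ _ (_) _ fun a => ?_)
  have hcoord : (fun ω : ℕ → α => ω k) ⁻¹' {a} =
      ⋃ (w : Fin (k + 1) → α) (_ : w (Fin.last k) = a), prefixCylinder (k + 1) w := by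
    ext ω
    simp only [mem_preimage, mem_singleton_iff, mem_iUnion, prefixCylinder, mem_ofPred_eq]
    refine ⟨fun h => ⟨fun j => ω j, h, fun _ => rfl⟩, ?_⟩
    rintro ⟨w, rfl, hw⟩
    exact hw (Fin.last k)
  rw [hcoord]
  exact .iUnion fun w => .iUnion fun _ =>
    MeasurableSpace.measurableSet_generateFrom ⟨k + 1, w, rfl⟩

lemma ext_of_prefixCylinder [Countable α] {μ ν : Measure (ℕ → α)} [IsFiniteMeasure μ]
    (h : ∀ n w, μ (prefixCylinder n w) = ν (prefixCylinder n w)) : μ = ν := by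
  refine ext_of_generate_finite _ generateFrom_prefixCylinders.symm isPiSystem_prefixCylinders
    ?_ ?_
  · rintro _ ⟨n, w, rfl⟩
    exact h n w
  · simpa using h 0 Fin.elim0

end PrefixCylinder

section FairCoin

def seqTail {α : Type*} (ω : ℕ → α) : ℕ → α := fun k => ω (k + 1)

lemma measurable_seqTail {α : Type*} [MeasurableSpace α] : Measurable (seqTail (α := α)) :=
  measurable_pi_lambda _ fun k => measurable_pi_apply (k + 1)

lemma seqTail_preimage_prefixCylinder_inter {α : Type*} (c : α) (n : ℕ) (w : Fin n → α) :
    seqTail ⁻¹' prefixCylinder n w ∩ {ω | ω 0 = c} = prefixCylinder (n + 1) (Fin.cons c w) := by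
  ext ω
  simp only [mem_inter_iff, mem_preimage, mem_ofPred_eq, prefixCylinder, Fin.forall_fin_succ,
    Fin.val_zero, Fin.cons_zero, Fin.val_succ, Fin.cons_succ, seqTail]
  exact and_comm

def IsFairCoinMeasure (P : Measure (ℕ → Bool)) : Prop :=
  ∀ n w, P (prefixCylinder n w) = (1 / 2) ^ n

lemma IsFairCoinMeasure.measure_seqTail_preimage_inter {P : Measure (ℕ → Bool)}
    [IsFiniteMeasure P] (hP : IsFairCoinMeasure P) (c : Bool) {B : Set (ℕ → Bool)}
    (hB : MeasurableSet B) : P (seqTail ⁻¹' B ∩ {ω | ω 0 = c}) = 1 / 2 * P B := by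
  set ν : Measure (ℕ → Bool) := (2 : ℝ≥0∞) • (P.restrict {ω | ω 0 = c}).map seqTail
  have hν : ∀ {S}, MeasurableSet S → ν S = 2 * P (seqTail ⁻¹' S ∩ {ω | ω 0 = c}) := fun hS => by
    rw [Measure.smul_apply, Measure.map_apply measurable_seqTail hS,
      Measure.restrict_apply (measurable_seqTail hS), smul_eq_mul]
  have hPν : P = ν := ext_of_prefixCylinder fun n w => by
    rw [hν (measurableSet_prefixCylinder n w), seqTail_preimage_prefixCylinder_inter, hP, hP,
      pow_succ', ← mul_assoc, ENNReal.mul_div_cancel two_ne_zero ENNReal.ofNat_ne_top, one_mul]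
  calc P (seqTail ⁻¹' B ∩ {ω | ω 0 = c})
      = 1 / 2 * (2 * P (seqTail ⁻¹' B ∩ {ω | ω 0 = c})) := by
        rw [← mul_assoc, ENNReal.div_mul_cancel two_ne_zero ENNReal.ofNat_ne_top, one_mul]
    _ = 1 / 2 * P B := by rw [← hν hB, ← hPν]

end FairCoin

section CodingMap

noncomputable def codingMap (l : ℝ) (ω : ℕ → Bool) : ℝ :=
  ∑' k, if ω k then l ^ (k + 1) else 0

variable {l : ℝ} (hl0 : 0 ≤ l) (hl1 : l < 1)
include hl0 hl1

lemma hasSum_pow_succ : HasSum (fun k : ℕ => l ^ (k + 1)) (l / (1 - l)) := by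
  simpa only [pow_succ', div_eq_mul_inv] using (hasSum_geometric_of_lt_one hl0 hl1).mul_left l

omit hl1 in
lemma codingMap_term_nonneg (ω : ℕ → Bool) (k : ℕ) : 0 ≤ if ω k then l ^ (k + 1) else 0 := by
  split <;> positivity

omit hl1 in
lemma codingMap_term_le (ω : ℕ → Bool) (k : ℕ) :
    (if ω k then l ^ (k + 1) else 0) ≤ l ^ (k + 1) := by
  split
  · exact le_rfl
  · positivity

lemma summable_codingMap_term (ω : ℕ → Bool) :
    Summable fun k => if ω k then l ^ (k + 1) else 0 :=
  (hasSum_pow_succ hl0 hl1).summable.of_nonneg_of_le (codingMap_term_nonneg hl0 ω)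
    (codingMap_term_le hl0 ω)

omit hl1 in
lemma codingMap_nonneg (ω : ℕ → Bool) : 0 ≤ codingMap l ω :=
  tsum_nonneg (codingMap_term_nonneg hl0 ω)

lemma codingMap_le (ω : ℕ → Bool) : codingMap l ω ≤ l / (1 - l) :=
  hasSum_le (codingMap_term_le hl0 ω) (summable_codingMap_term hl0 hl1 ω).hasSum
    (hasSum_pow_succ hl0 hl1)

lemma codingMap_mem_Icc (ω : ℕ → Bool) : codingMap l ω ∈ Icc 0 (l / (1 - l)) :=
  ⟨codingMap_nonneg hl0 ω, codingMap_le hl0 hl1 ω⟩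

lemma continuous_codingMap : Continuous (codingMap l) := by
  refine continuous_tsum (fun k => ?_) (hasSum_pow_succ hl0 hl1).summable fun k ω => ?_
  · exact (continuous_of_discreteTopology
      (f := fun b : Bool => if b then l ^ (k + 1) else 0)).comp (continuous_apply k)
  · rw [Real.norm_of_nonneg (codingMap_term_nonneg hl0 ω k)]
    exact codingMap_term_le hl0 ω k

lemma codingMap_eq_add_seqTail (ω : ℕ → Bool) :
    codingMap l ω = (if ω 0 then l else 0) + l * codingMap l (seqTail ω) := by
  rw [codingMap, (summable_codingMap_term hl0 hl1 ω).tsum_eq_zero_add, codingMap,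
    ← tsum_mul_left]
  congr 1
  · simp
  · exact tsum_congr fun k => by rw [mul_ite, mul_zero, ← pow_succ']; rfl

lemma codingMap_preimage_congr {s t : Set ℝ}
    (h : ∀ x ∈ Icc 0 (l / (1 - l)), x ∈ s ↔ x ∈ t) : codingMap l ⁻¹' s = codingMap l ⁻¹' t :=
  ext fun ω => h _ (codingMap_mem_Icc hl0 hl1 ω)

end CodingMap

section SelfSimilarity

variable {P : Measure (ℕ → Bool)} [IsFiniteMeasure P] (hP : IsFairCoinMeasure P)
include hP

lemma IsFairCoinMeasure.measureReal_seqTail_preimage_inter (c : Bool) {B : Set (ℕ → Bool)}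
    (hB : MeasurableSet B) : P.real (seqTail ⁻¹' B ∩ {ω | ω 0 = c}) = 1 / 2 * P.real B := by
  simp [measureReal_def, hP.measure_seqTail_preimage_inter c hB, ENNReal.toReal_mul]

variable {l : ℝ} (hl0 : 0 ≤ l) (hl1 : l < 1)
include hl0 hl1

lemma IsFairCoinMeasure.measureReal_codingMap_preimage {A : Set ℝ} (hA : MeasurableSet A) :
    P.real (codingMap l ⁻¹' A) =
      1 / 2 * P.real (codingMap l ⁻¹' ((fun x => l + l * x) ⁻¹' A)) +
        1 / 2 * P.real (codingMap l ⁻¹' ((fun x => l * x) ⁻¹' A)) := by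
  have hm := (continuous_codingMap hl0 hl1).measurable
  set B₁ := codingMap l ⁻¹' ((fun x => l + l * x) ⁻¹' A)
  set B₀ := codingMap l ⁻¹' ((fun x => l * x) ⁻¹' A)
  have hB₁ : MeasurableSet B₁ := hm ((by fun_prop : Measurable fun x => l + l * x) hA)
  have hB₀ : MeasurableSet B₀ := hm ((by fun_prop : Measurable fun x => l * x) hA)
  have hsplit : codingMap l ⁻¹' A =
      (seqTail ⁻¹' B₁ ∩ {ω | ω 0 = true}) ∪ (seqTail ⁻¹' B₀ ∩ {ω | ω 0 = false}) := by
    ext ω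
    rw [mem_preimage, codingMap_eq_add_seqTail hl0 hl1]
    cases h : ω 0 <;> simp [h, B₁, B₀]
  have hdisj : Disjoint (seqTail ⁻¹' B₁ ∩ {ω | ω 0 = true})
      (seqTail ⁻¹' B₀ ∩ {ω | ω 0 = false}) :=
    disjoint_left.2 fun ω h₁ h₀ => by simp_all
  have hfalse : MeasurableSet {ω : ℕ → Bool | ω 0 = false} :=
    measurableSet_eq_fun (measurable_pi_apply 0) measurable_const
  rw [hsplit, measureReal_union hdisj ((measurable_seqTail hB₀).inter hfalse),
    hP.measureReal_seqTail_preimage_inter true hB₁,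
    hP.measureReal_seqTail_preimage_inter false hB₀]

lemma IsFairCoinMeasure.measureReal_codingMap_preimage_of_iff {A B₁ B₀ : Set ℝ}
    (hA : MeasurableSet A) (h₁ : ∀ x ∈ Icc 0 (l / (1 - l)), l + l * x ∈ A ↔ x ∈ B₁)
    (h₀ : ∀ x ∈ Icc 0 (l / (1 - l)), l * x ∈ A ↔ x ∈ B₀) :
    P.real (codingMap l ⁻¹' A) =
      1 / 2 * P.real (codingMap l ⁻¹' B₁) + 1 / 2 * P.real (codingMap l ⁻¹' B₀) := by
  rw [hP.measureReal_codingMap_preimage hl0 hl1 hA,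
    codingMap_preimage_congr hl0 hl1 (s := (fun x => l + l * x) ⁻¹' A) h₁,
    codingMap_preimage_congr hl0 hl1 (s := (fun x => l * x) ⁻¹' A) h₀]

end SelfSimilarity

section GoldenRatio

variable {l : ℝ} (hl0 : 0 < l) (hl : l ^ 2 + l = 1)
include hl0 hl

omit hl0 in
lemma lt_one_of_sq_add_self_eq_one : l < 1 := by nlinarith

lemma div_one_sub_eq_inv_of_sq_add_self_eq_one : l / (1 - l) = l⁻¹ := by
  rw [show 1 - l = l ^ 2 by linarith]
  field_simp

lemma sq_div_one_sub_of_sq_add_self_eq_one : l ^ 2 / (1 - l) = 1 := by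
  rw [show 1 - l = l ^ 2 by linarith]
  exact div_self (by positivity)

variable {P : Measure (ℕ → Bool)} [IsProbabilityMeasure P] (hP : IsFairCoinMeasure P)
include hP

lemma IsFairCoinMeasure.measureReal_codingMap_preimage_of_golden {A B₁ B₀ : Set ℝ}
    (hA : MeasurableSet A) (h₁ : ∀ x, 0 ≤ x → l * x ≤ 1 → (l + l * x ∈ A ↔ x ∈ B₁))
    (h₀ : ∀ x, 0 ≤ x → l * x ≤ 1 → (l * x ∈ A ↔ x ∈ B₀)) :
    P.real (codingMap l ⁻¹' A) =
      1 / 2 * P.real (codingMap l ⁻¹' B₁) + 1 / 2 * P.real (codingMap l ⁻¹' B₀) := by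
  have hmem : ∀ x ∈ Icc 0 (l / (1 - l)), 0 ≤ x ∧ l * x ≤ 1 := fun x ⟨hx0, hx1⟩ => by
    rw [div_one_sub_eq_inv_of_sq_add_self_eq_one hl0 hl] at hx1
    exact ⟨hx0, (le_inv_mul_iff₀ hl0).1 (by rwa [mul_one])⟩
  exact hP.measureReal_codingMap_preimage_of_iff hl0.le (lt_one_of_sq_add_self_eq_one hl) hA
    (fun x hx => h₁ x (hmem x hx).1 (hmem x hx).2) (fun x hx => h₀ x (hmem x hx).1 (hmem x hx).2)

lemma IsFairCoinMeasure.measureReal_codingMap_Ioi_zero_of_golden :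
    P.real (codingMap l ⁻¹' Ioi 0) = 1 := by
  have h : P.real (codingMap l ⁻¹' Ioi 0) =
      1 / 2 * P.real (codingMap l ⁻¹' univ) + 1 / 2 * P.real (codingMap l ⁻¹' Ioi 0) :=
    hP.measureReal_codingMap_preimage_of_golden hl0 hl measurableSet_Ioi
      (fun x hx _ => by simp only [mem_Ioi, mem_univ, iff_true]; positivity)
      (fun x _ _ => by simp only [mem_Ioi, mul_pos_iff_of_pos_left hl0])
  rw [preimage_univ, probReal_univ] at h
  linarith

lemma IsFairCoinMeasure.measureReal_codingMap_Ici_inv_of_golden :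
    P.real (codingMap l ⁻¹' Ici l⁻¹) = 0 := by
  have h : P.real (codingMap l ⁻¹' Ici l⁻¹) =
      1 / 2 * P.real (codingMap l ⁻¹' Ici l⁻¹) + 1 / 2 * P.real (codingMap l ⁻¹' ∅) :=
    hP.measureReal_codingMap_preimage_of_golden hl0 hl measurableSet_Ici
      (fun x _ _ => by
        simp only [mem_Ici, inv_le_iff_one_le_mul₀' hl0]
        constructor <;> intro <;> nlinarith)
      (fun x _ hx => by
        simp only [mem_Ici, inv_le_iff_one_le_mul₀' hl0, mem_empty_iff_false, iff_false, not_le]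
        nlinarith)
  rw [preimage_empty, measureReal_empty] at h
  linarith

lemma IsFairCoinMeasure.measureReal_codingMap_Ici_of_golden :
    P.real (codingMap l ⁻¹' Ici l) = 2 / 3 := by
  have ha : P.real (codingMap l ⁻¹' Ici l) =
      1 / 2 * P.real (codingMap l ⁻¹' univ) + 1 / 2 * P.real (codingMap l ⁻¹' Ici 1) :=
    hP.measureReal_codingMap_preimage_of_golden hl0 hl measurableSet_Ici
      (fun x hx _ => by simp only [mem_Ici, mem_univ, iff_true]; nlinarith)
      (fun x _ _ => by simp only [mem_Ici, le_mul_iff_one_le_right hl0])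
  have hb : P.real (codingMap l ⁻¹' Ici 1) =
      1 / 2 * P.real (codingMap l ⁻¹' Ici l) + 1 / 2 * P.real (codingMap l ⁻¹' Ici l⁻¹) :=
    hP.measureReal_codingMap_preimage_of_golden hl0 hl measurableSet_Ici
      (fun x _ _ => by simp only [mem_Ici]; constructor <;> intro <;> nlinarith)
      (fun x _ _ => by simp only [mem_Ici, inv_le_iff_one_le_mul₀' hl0])
  rw [preimage_univ, probReal_univ] at ha
  rw [hP.measureReal_codingMap_Ici_inv_of_golden hl0 hl] at hb
  linarith

lemma IsFairCoinMeasure.measureReal_codingMap_Ioi_one_of_golden :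
    P.real (codingMap l ⁻¹' Ioi 1) = 1 / 3 := by
  have hc : P.real (codingMap l ⁻¹' Ioi 1) =
      1 / 2 * P.real (codingMap l ⁻¹' Ioi l) + 1 / 2 * P.real (codingMap l ⁻¹' ∅) :=
    hP.measureReal_codingMap_preimage_of_golden hl0 hl measurableSet_Ioi
      (fun x _ _ => by simp only [mem_Ioi]; constructor <;> intro <;> nlinarith)
      (fun x _ hx => by simp only [mem_Ioi, mem_empty_iff_false, iff_false, not_lt]; exact hx)
  have hd : P.real (codingMap l ⁻¹' Ioi l) =
      1 / 2 * P.real (codingMap l ⁻¹' Ioi 0) + 1 / 2 * P.real (codingMap l ⁻¹' Ioi 1) :=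
    hP.measureReal_codingMap_preimage_of_golden hl0 hl measurableSet_Ioi
      (fun x _ _ => by simp only [mem_Ioi, lt_add_iff_pos_right, mul_pos_iff_of_pos_left hl0])
      (fun x _ _ => by simp only [mem_Ioi, lt_mul_iff_one_lt_right hl0])
  rw [preimage_empty, measureReal_empty] at hc
  rw [hP.measureReal_codingMap_Ioi_zero_of_golden hl0 hl] at hd
  linarith

end GoldenRatio

/-- Let `λ = (√5 - 1)/2` (the reciprocal golden ratio, so
`λ² + λ = 1`). Then `μ_λ([λ, λ/(1-λ)]) = μ_λ(τ₁(X_λ)) = 2/3`, and the equilibrium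
measure of the overlap is `μ_λ(τ₀(X_λ) ∩ τ₁(X_λ)) = μ_λ([λ, λ²/(1-λ)]) = 1/3`. Here
`μ_λ(E) = P(π_λ⁻¹(E))`. -/
theorem stmt12 (l : ℝ) (hl : l = (Real.sqrt 5 - 1) / 2)
    (P : Measure (ℕ → Bool)) [IsProbabilityMeasure P]
    (hP : ∀ (n : ℕ) (w : Fin n → Bool),
      P {ω | ∀ k : Fin n, ω k = w k} = (1 / 2) ^ n)
    (pil : (ℕ → Bool) → ℝ)
    (hpil : ∀ ω, pil ω = ∑' k : ℕ, (if ω k then l ^ (k + 1) else 0)) :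
    P {ω | pil ω ∈ Set.Icc l (l / (1 - l))} = 2 / 3 ∧
      P {ω | pil ω ∈ Set.Icc l (l ^ 2 / (1 - l))} = 1 / 3 := by
  have hsqrt : Real.sqrt 5 ^ 2 = 5 := Real.sq_sqrt (by norm_num)
  have hl0 : 0 < l := by rw [hl]; nlinarith [Real.sqrt_nonneg 5]
  have hgold : l ^ 2 + l = 1 := by rw [hl]; nlinarith
  have hl1 : l < 1 := lt_one_of_sq_add_self_eq_one hgold
  have hP' : IsFairCoinMeasure P := hP
  obtain rfl : pil = codingMap l := funext hpil
  change P (codingMap l ⁻¹' _) = _ ∧ P (codingMap l ⁻¹' _) = _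
  have hfirst : codingMap l ⁻¹' Icc l (l / (1 - l)) = codingMap l ⁻¹' Ici l :=
    codingMap_preimage_congr hl0.le hl1 fun x hx => ⟨fun h => h.1, fun h => ⟨h, hx.2⟩⟩
  have hsecond : codingMap l ⁻¹' Icc l (l ^ 2 / (1 - l)) =
      codingMap l ⁻¹' Ici l \ codingMap l ⁻¹' Ioi 1 := by
    rw [sq_div_one_sub_of_sq_add_self_eq_one hl0 hgold, ← preimage_sdiff, Ici_sdiff_Ioi]
  rw [← ofReal_measureReal, ← ofReal_measureReal, hfirst, hsecond,
    measureReal_sdiff (preimage_mono (Ioi_subset_Ici hl1.le))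
      ((continuous_codingMap hl0.le hl1).measurable measurableSet_Ioi),
    hP'.measureReal_codingMap_Ici_of_golden hl0 hgold,
    hP'.measureReal_codingMap_Ioi_one_of_golden hl0 hgold]
  norm_num [ENNReal.ofReal_div_of_pos]
end

section
/- For every λ ∈ [ (√5 − 1)/2, 1 ), the equilibrium measure of the overlap satisfies the lower bound μ_λ( τ₀(X_λ) ∩ τ₁(X_λ) ) = μ_λ([λ, λ²/(1−λ)]) ≥ 1/3. -/
open MeasureTheory ENNReal


/-- pattern bit: index k in cylinder of type (b, n) -/
def wpat (b : Bool) (n k : ℕ) : Bool := xor (decide (k % 2 = 1 ∨ k = 2*n)) b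

/-- the set of "determined" indices with value `!b` -/
def detS (n : ℕ) : Finset ℕ :=
  ((Finset.range (n+1)).image (fun i => 2*i+1)) ∪ {2*(n+1)}

lemma mem_detS {n k : ℕ} (hk : k ∈ detS n) : (k % 2 = 1 ∨ k = 2*(n+1)) ∧ k < 2*(n+1)+1 := by
  simp only [detS, Finset.mem_union, Finset.mem_image, Finset.mem_range, Finset.mem_singleton] at hk
  rcases hk with ⟨i, hi, rfl⟩ | rfl <;> omega

lemma sum_detS (l : ℝ) (n : ℕ) :
    ∑ k ∈ detS n, l^(k+1) = (∑ i ∈ Finset.range (n+1), l^(2*i+2)) + l^(2*(n+1)+1) := by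
  have hdisj : Disjoint ((Finset.range (n+1)).image (fun i => 2*i+1)) ({2*(n+1)} : Finset ℕ) := by
    simp only [Finset.disjoint_singleton_right, Finset.mem_image, Finset.mem_range]
    rintro ⟨i, hi, h⟩; omega
  have hinj : ∀ a ∈ Finset.range (n+1), ∀ b ∈ Finset.range (n+1),
      2*a+1 = 2*b+1 → a = b := by intro a _ b _ h; omega
  rw [detS, Finset.sum_union hdisj, Finset.sum_image hinj, Finset.sum_singleton]

lemma patsum (l : ℝ) (hl0 : 0 ≤ l) (h1 : 1 ≤ l + l^2) (n : ℕ) :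
    l ≤ (∑ i ∈ Finset.range (n+1), l^(2*i+2)) + l^(2*(n+1)+1) := by
  induction n with
  | zero =>
    rw [Finset.sum_range_one]
    have e : l^(2*(0+1)+1) = l * l^2 := by ring
    have e2 : l^(2*0+2) = l^2 := by ring
    nlinarith [mul_nonneg hl0 (by linarith : (0:ℝ) ≤ l + l^2 - 1)]
  | succ n ih =>
    rw [Finset.sum_range_succ]
    have e1 : l^(2*(n+1)+2) = l^(2*(n+1)+1) * l := by ring
    have e2 : l^(2*(n+2)+1) = l^(2*(n+1)+1) * l^2 := by ring
    nlinarith [pow_nonneg hl0 (2*(n+1)+1)]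

def cyl (b : Bool) (m : ℕ) : Set (ℕ → Bool) :=
  {ω | ∀ k : Fin (2*(m+1)+1), ω k = wpat b (m+1) k}

lemma wpat_zero (b : Bool) (m : ℕ) : wpat b (m+1) 0 = b := by
  simp [wpat]

lemma wpat_det {m k : ℕ} (h : k % 2 = 1 ∨ k = 2*(m+1)) (b : Bool) : wpat b (m+1) k = !b := by
  have : decide (k % 2 = 1 ∨ k = 2*(m+1)) = true := decide_eq_true h
  simp [wpat, this]

lemma summable_pow1 (l : ℝ) (hl0 : 0 ≤ l) (hl1 : l < 1) : Summable (fun k : ℕ => l^(k+1)) :=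
  ((summable_geometric_of_lt_one hl0 hl1).mul_right l).congr (fun k => (pow_succ l k).symm)

lemma summable_pow2 (l : ℝ) (hl0 : 0 ≤ l) (hl1 : l < 1) : Summable (fun k : ℕ => l^(k+2)) :=
  ((summable_geometric_of_lt_one hl0 hl1).mul_right (l^2)).congr (fun k => (pow_add l k 2).symm)

lemma tsum_pow1 (l : ℝ) (hl0 : 0 ≤ l) (hl1 : l < 1) : ∑' k : ℕ, l^(k+1) = l/(1-l) := by
  have h1l : (0:ℝ) < 1 - l := by linarith
  rw [tsum_congr (fun k : ℕ => pow_succ l k), tsum_mul_right,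
    tsum_geometric_of_lt_one hl0 hl1]
  field_simp

lemma tsum_pow2 (l : ℝ) (hl0 : 0 ≤ l) (hl1 : l < 1) : ∑' k : ℕ, l^(k+2) = l^2/(1-l) := by
  have h1l : (0:ℝ) < 1 - l := by linarith
  rw [tsum_congr (fun k : ℕ => pow_add l k 2), tsum_mul_right,
    tsum_geometric_of_lt_one hl0 hl1]
  field_simp

lemma pil_mem (l : ℝ) (hl0 : 0 ≤ l) (hl1 : l < 1) (h1 : 1 ≤ l + l ^ 2)
    (b : Bool) (m : ℕ) (ω : ℕ → Bool) (hω : ω ∈ cyl b m) :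
    (∑' k : ℕ, (if ω k then l ^ (k + 1) else 0)) ∈ Set.Icc l (l ^ 2 / (1 - l)) := by
  set f : ℕ → ℝ := fun k => if ω k then l^(k+1) else 0 with hf
  have hωk : ∀ k, k < 2*(m+1)+1 → ω k = wpat b (m+1) k := fun k hk => hω ⟨k, hk⟩
  have hfnn : ∀ k, 0 ≤ f k := by
    intro k; simp only [hf]; split
    · exact pow_nonneg hl0 _
    · exact le_rfl
  have hfle : ∀ k, f k ≤ l^(k+1) := by
    intro k; simp only [hf]; split
    · exact le_rfl
    · exact pow_nonneg hl0 _
  have hsf : Summable f := (summable_pow1 l hl0 hl1).of_nonneg_of_le hfnn hfle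
  have h1l : (0:ℝ) < 1 - l := by linarith
  have hdet : ∀ k ∈ detS m, ω k = !b := by
    intro k hk
    obtain ⟨h1', h2'⟩ := mem_detS hk
    rw [hωk k h2', wpat_det h1']
  have hSsum : l ≤ ∑ k ∈ detS m, l^(k+1) := by
    rw [sum_detS]; exact patsum l hl0 h1 m
  have hω0 : ω 0 = b := by rw [hωk 0 (by omega), wpat_zero]
  cases b with
  | false =>
    refine ⟨?_, ?_⟩
    · calc l ≤ ∑ k ∈ detS m, l^(k+1) := hSsum
        _ = ∑ k ∈ detS m, f k :=
            Finset.sum_congr rfl fun k hk => by simp [hf, hdet k hk]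
        _ ≤ ∑' k, f k := Summable.sum_le_tsum _ (fun k _ => hfnn k) hsf
    · have hf0 : f 0 = 0 := by simp [hf, hω0]
      have he : ∑' k, f k = ∑' k, f (k+1) := by
        rw [Summable.tsum_eq_zero_add hsf, hf0, zero_add]
      rw [he, ← tsum_pow2 l hl0 hl1]
      exact Summable.tsum_le_tsum (fun k => hfle (k+1))
        (hsf.comp_injective Nat.succ_injective) (summable_pow2 l hl0 hl1)
  | true =>
    refine ⟨?_, ?_⟩
    · have hf0 : f 0 = l := by simp [hf, hω0]
      calc l = f 0 := hf0.symm
        _ ≤ ∑' k, f k := Summable.le_tsum hsf 0 (fun j _ => hfnn j)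
    · set g : ℕ → ℝ := fun k => f k + Set.indicator (↑(detS m)) (fun k => l^(k+1)) k with hg
      have hgle : ∀ k, g k ≤ l^(k+1) := by
        intro k
        by_cases hk : k ∈ detS m
        · have hfk : f k = 0 := by simp [hf, hdet k hk]
          simp [hg, hfk, Set.indicator_of_mem (Finset.mem_coe.mpr hk)]
        · simp only [hg, Set.indicator_of_notMem (fun h => hk (Finset.mem_coe.mp h)), add_zero]
          exact hfle k
      have hsind : Summable (Set.indicator (↑(detS m)) (fun k : ℕ => l^(k+1))) :=
        summable_of_ne_finset_zero (s := detS m)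
          (fun k hk => Set.indicator_of_notMem (fun h => hk (Finset.mem_coe.mp h)) _)
      have hsg : Summable g := hsf.add hsind
      have heq : ∑' k, g k = (∑' k, f k) + ∑ k ∈ detS m, l^(k+1) := by
        rw [hg, Summable.tsum_add hsf hsind]
        congr 1
        rw [← tsum_subtype]
        exact Finset.tsum_subtype (detS m) (fun k => l^(k+1))
      have hle : ∑' k, g k ≤ l/(1-l) := by
        rw [← tsum_pow1 l hl0 hl1]
        exact Summable.tsum_le_tsum hgle hsg (summable_pow1 l hl0 hl1)
      have hdiv : l/(1-l) - l = l^2/(1-l) := by field_simp; ring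
      linarith [heq ▸ hle]

lemma wpat_undet {n k : ℕ} (h : ¬(k % 2 = 1 ∨ k = 2*n)) (b : Bool) : wpat b n k = b := by
  have : decide (k % 2 = 1 ∨ k = 2*n) = false := decide_eq_false h
  simp [wpat, this]

lemma cyl_meas (b : Bool) (m : ℕ) : MeasurableSet (cyl b m) := by
  have h : cyl b m = ⋂ k : Fin (2*(m+1)+1), {ω : ℕ → Bool | ω k = wpat b (m+1) k} := by
    ext ω; simp [cyl, Set.mem_iInter]
  rw [h]
  exact MeasurableSet.iInter fun k =>
    (measurable_pi_apply (k : ℕ)) (measurableSet_singleton _)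

lemma cyl_lt_disj {b : Bool} {m m' : ℕ} (h : m < m') {ω : ℕ → Bool}
    (h1 : ω ∈ cyl b m) (h2 : ω ∈ cyl b m') : False := by
  have e1 : ω (2*(m+1)) = !b := by
    have h0 : ω (2*(m+1)) = wpat b (m+1) (2*(m+1)) := h1 ⟨2*(m+1), by omega⟩
    rwa [wpat_det (Or.inr rfl)] at h0
  have e2 : ω (2*(m+1)) = b := by
    have h0 : ω (2*(m+1)) = wpat b (m'+1) (2*(m+1)) := h2 ⟨2*(m+1), by omega⟩
    rwa [wpat_undet (by omega)] at h0
  rw [e1] at e2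
  cases b <;> simp at e2

lemma cyl_zero {b : Bool} {m : ℕ} {ω : ℕ → Bool} (h : ω ∈ cyl b m) : ω 0 = b := by
  have h0 : ω 0 = wpat b (m+1) 0 := h ⟨0, by omega⟩
  rwa [wpat_zero] at h0

lemma cyl_disj : Pairwise (Function.onFun Disjoint (fun p : Bool × ℕ => cyl p.1 p.2)) := by
  rintro ⟨b, m⟩ ⟨b', m'⟩ hne
  rw [Function.onFun, Set.disjoint_left]
  intro ω h h'
  by_cases hb : b = b'
  · subst hb
    have hm : m ≠ m' := fun hmm => hne (by rw [hmm])
    rcases Nat.lt_or_ge m m' with hlt | hge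
    · exact cyl_lt_disj hlt h h'
    · exact cyl_lt_disj (by omega) h' h
  · exact hb ((cyl_zero h).symm.trans (cyl_zero h'))

lemma tsum_half : ∑' m : ℕ, ((1:ℝ)/2)^(2*(m+1)+1) = 1/6 := by
  have h : ∀ m : ℕ, ((1:ℝ)/2)^(2*(m+1)+1) = (1/4:ℝ)^m * (1/8) := by
    intro m
    rw [show 2*(m+1)+1 = 2*m+3 from by omega, pow_add, pow_mul]
    norm_num
  rw [tsum_congr h, tsum_mul_right,
    tsum_geometric_of_lt_one (by norm_num) (by norm_num : (1/4:ℝ) < 1)]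
  norm_num

lemma summable_half : Summable (fun m : ℕ => ((1:ℝ)/2)^(2*(m+1)+1)) := by
  refine ((summable_geometric_of_lt_one (by norm_num) (by norm_num : (1/4:ℝ) < 1)).mul_right
    (1/8)).congr fun m => ?_
  rw [show 2*(m+1)+1 = 2*m+3 from by omega, pow_add, pow_mul]
  norm_num

/-- For every `λ ∈ [(√5-1)/2, 1)`, the equilibrium measure of the
overlap satisfies `μ_λ(τ₀(X_λ) ∩ τ₁(X_λ)) = μ_λ([λ, λ²/(1-λ)]) ≥ 1/3`, where
`μ_λ(E) = P(π_λ⁻¹(E))`. -/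
theorem stmt13 (l : ℝ) (hl : (Real.sqrt 5 - 1) / 2 ≤ l) (hl1 : l < 1)
    (P : Measure (ℕ → Bool)) [IsProbabilityMeasure P]
    (hP : ∀ (n : ℕ) (w : Fin n → Bool),
      P {ω | ∀ k : Fin n, ω k = w k} = (1 / 2) ^ n)
    (pil : (ℕ → Bool) → ℝ)
    (hpil : ∀ ω, pil ω = ∑' k : ℕ, (if ω k then l ^ (k + 1) else 0)) :
    1 / 3 ≤ P {ω | pil ω ∈ Set.Icc l (l ^ 2 / (1 - l))} := by
  have h5 : Real.sqrt 5 ^ 2 = 5 := Real.sq_sqrt (by norm_num)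
  have hs1 : (1:ℝ) ≤ Real.sqrt 5 := by nlinarith [Real.sqrt_nonneg 5]
  have hl0 : 0 ≤ l := by linarith
  have h1 : 1 ≤ l + l ^ 2 := by
    nlinarith [Real.sqrt_nonneg 5, sq_nonneg (2*l + 1 - Real.sqrt 5)]
  -- the union of cylinders is inside the overlap event
  have hsub : (⋃ p : Bool × ℕ, cyl p.1 p.2) ⊆ {ω | pil ω ∈ Set.Icc l (l^2/(1-l))} := by
    intro ω hω
    rw [Set.mem_iUnion] at hω
    obtain ⟨⟨b, m⟩, hm⟩ := hω
    rw [Set.mem_setOf_eq, hpil ω]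
    exact pil_mem l hl0 hl1 h1 b m ω hm
  -- the measure of each cylinder
  have hPc : ∀ (b : Bool) (m : ℕ),
      P (cyl b m) = ((1:ℝ≥0∞)/2)^(2*(m+1)+1) := by
    intro b m
    exact hP (2*(m+1)+1) (fun k => wpat b (m+1) k)
  -- total measure of the union
  have hUnion : P (⋃ p : Bool × ℕ, cyl p.1 p.2) = 1/3 := by
    rw [measure_iUnion cyl_disj (fun p => cyl_meas p.1 p.2)]
    have hhalf : ((1:ℝ≥0∞)/2) = ENNReal.ofReal (1/2) := by
      rw [ENNReal.ofReal_div_of_pos (by norm_num)]; simp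
    calc ∑' p : Bool × ℕ, P (cyl p.1 p.2)
        = ∑' p : Bool × ℕ, ((1:ℝ≥0∞)/2)^(2*(p.2+1)+1) := by
          exact tsum_congr fun p => hPc p.1 p.2
      _ = (∑' m : ℕ, ((1:ℝ≥0∞)/2)^(2*(m+1)+1))
          + ∑' m : ℕ, ((1:ℝ≥0∞)/2)^(2*(m+1)+1) := by
          rw [ENNReal.tsum_prod', tsum_bool]
      _ = ENNReal.ofReal (1/6) + ENNReal.ofReal (1/6) := by
          have : ∑' m : ℕ, ((1:ℝ≥0∞)/2)^(2*(m+1)+1) = ENNReal.ofReal (1/6) := by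
            rw [← tsum_half, ENNReal.ofReal_tsum_of_nonneg
              (fun m => by positivity) summable_half]
            exact tsum_congr fun m => by
              rw [ENNReal.ofReal_pow (by norm_num), ← hhalf]
          rw [this]
      _ = 1/3 := by
          rw [← ENNReal.ofReal_add (by norm_num) (by norm_num)]
          rw [show (1:ℝ)/6 + 1/6 = 1/3 from by norm_num]
          rw [ENNReal.ofReal_div_of_pos (by norm_num)]; simp
  calc (1/3 : ℝ≥0∞) = P (⋃ p : Bool × ℕ, cyl p.1 p.2) := hUnion.symm
    _ ≤ P {ω | pil ω ∈ Set.Icc l (l^2/(1-l))} := measure_mono hsub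
end

section
/- Let N ≥ 2, let (τ_i)_{i=1}^N be a contractive IFS on a nonempty complete metric space Y, let Ω = {1,…,N}^ℕ with the infinite-product Bernoulli(1/N) probability measure P, let σ_i be the prepending shifts, and let π : Ω → Y be a continuous map satisfying π∘σ_i = τ_i∘π for all i (the encoding map). Let μ = P∘π^{-1} on Y, so that μ = (1/N)∑_i μ∘τ_i^{-1}. Define F_i : L²(Y,μ) → L²(Y,μ) by F_i f = (1/√N) f∘τ_i, define T_i : L²(Ω,P) → L²(Ω,P) by T_i ψ = (1/√N) ψ∘σ_i, let S_i = T_i* (the Hilbert adjoint), and define V : L²(Y,μ) → L²(Ω,P) by Vf = f∘π. Then: (a) V is isometric, i.e. ∫_Ω |f∘π|² dP = ∫_Y |f|² dμ for all f ∈ L²(μ); (b) V F_i = T_i V for each i (the intertwining relations V F_i = S_i* V); (c) the extension is minimal: the closed linear span of ⋃_{n≥0} ⋃_{(i₁,…,i_n) ∈ {1,…,N}^n} S_{i₁} S_{i₂} ⋯ S_{i_n} ( V(L²(Y,μ)) ) equals all of L²(Ω,P). -/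
/-!
Part (a) is the change of variables `μ = P ∘ π⁻¹`, and (b) is `π ∘ σᵢ = τᵢ ∘ π`, transported
through the fact that `σᵢ` is quasi-measure-preserving. For (c), a `ψ` orthogonal to every
`S_w V f` is in particular orthogonal to `S_w V 1`, so every product of the `Tᵢ` maps `ψ` to a
function of integral zero. Such a product is, up to a constant, composition with prepending a
word `m`, and prepending `m` pushes `P` forward to `N^|m|` times `P` restricted to the cylinder
`[m]`. Hence `ψ` integrates to zero over every cylinder; cylinders form a π-system generating the
product σ-algebra, so `ψ = 0`.
-/

open MeasureTheory ENNReal ContinuousLinearMap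

theorem MeasureTheory.ae_eq_zero_of_forall_setIntegral_eq_zero_of_isPiSystem {α E : Type*}
    [m0 : MeasurableSpace α] [NormedAddCommGroup E] [NormedSpace ℝ E] [CompleteSpace E]
    {μ : Measure α} [SigmaFinite μ] {s : Set (Set α)} (h_eq : m0 = .generateFrom s)
    (h_inter : IsPiSystem s) {f : α → E} (hf : Integrable f μ) (h_univ : ∫ x, f x ∂μ = 0)
    (h_basic : ∀ t ∈ s, ∫ x in t, f x ∂μ = 0) : f =ᵐ[μ] 0 := by
  have h_all : ∀ t, MeasurableSet t → ∫ x in t, f x ∂μ = 0 := by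
    refine MeasurableSpace.induction_on_inter h_eq h_inter (by simp) h_basic
      (fun t ht h => ?_) (fun t htd htm h => ?_)
    · rwa [← integral_add_compl ht hf, h, zero_add] at h_univ
    · simp [integral_iUnion htm htd hf.integrableOn, h]
  exact ae_eq_zero_of_forall_setIntegral_eq_of_sigmaFinite (fun _ _ _ => hf.integrableOn)
    fun t ht _ => h_all t ht

theorem ContinuousLinearMap.inner_prod_map_adjoint {𝕜 E : Type*} [RCLike 𝕜]
    [NormedAddCommGroup E] [InnerProductSpace 𝕜 E] [CompleteSpace E]
    (l : List (E →L[𝕜] E)) (x y : E) :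
    inner 𝕜 ((l.map adjoint).prod x) y = inner 𝕜 x (l.reverse.prod y) := by
  induction l generalizing y with
  | nil => simp
  | cons A l ih =>
    rw [List.map_cons, List.prod_cons, mul_apply_eq_comp, adjoint_inner_left, ih,
      List.reverse_cons, List.prod_append, List.prod_singleton, mul_apply_eq_comp]

theorem MeasureTheory.Lp.norm_eq_of_ae_eq_comp {α β E : Type*} [MeasurableSpace α]
    [MeasurableSpace β] [NormedAddCommGroup E] {p : ℝ≥0∞} {P : Measure α} {π : α → β}
    (hπ : AEMeasurable π P) {f : Lp E p (P.map π)} {g : Lp E p P} (h : g =ᵐ[P] f ∘ π) :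
    ‖g‖ = ‖f‖ := by
  rw [Lp.norm_def, Lp.norm_def, eLpNorm_congr_ae h,
    eLpNorm_map_measure (Lp.aestronglyMeasurable f) hπ]

namespace SymbolicDilation

variable {N : ℕ}

def prependWord (m : List (Fin N)) (ω : ℕ → Fin N) : ℕ → Fin N :=
  m.foldr prependShift ω

def prefixCylinder (m : List (Fin N)) : Set (ℕ → Fin N) :=
  {ω | ∀ k : Fin m.length, ω k = m.get k}

lemma measurable_prependShift (j : Fin N) : Measurable (prependShift j) := by
  refine measurable_pi_iff.mpr fun n => ?_
  cases n with
  | zero => exact measurable_const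
  | succ k => exact measurable_pi_apply k

lemma measurable_prependWord (m : List (Fin N)) : Measurable (prependWord m) := by
  induction m with
  | nil => exact measurable_id
  | cons a m ih => exact (measurable_prependShift a).comp ih

lemma measurableSet_prefixCylinder (m : List (Fin N)) : MeasurableSet (prefixCylinder m) := by
  simp only [prefixCylinder, Set.ofPred_forall]
  exact .iInter fun k => measurableSet_eq_fun (measurable_pi_apply _) measurable_const

@[simp]
lemma prefixCylinder_nil : prefixCylinder ([] : List (Fin N)) = Set.univ := by
  ext ω; simp [prefixCylinder]

lemma mem_prefixCylinder_cons {a : Fin N} {m : List (Fin N)} {ω : ℕ → Fin N} :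
    ω ∈ prefixCylinder (a :: m) ↔ ω 0 = a ∧ (fun k => ω (k + 1)) ∈ prefixCylinder m := by
  simp [prefixCylinder, Fin.forall_fin_succ]

lemma preimage_prependShift_prefixCylinder_cons (j a : Fin N) (m : List (Fin N)) :
    prependShift j ⁻¹' prefixCylinder (a :: m) = if j = a then prefixCylinder m else ∅ := by
  ext ω
  split_ifs with h <;> simp [mem_prefixCylinder_cons, prependShift, h]

lemma prefixCylinder_subset {m m' : List (Fin N)} {ω : ℕ → Fin N} (hω : ω ∈ prefixCylinder m)
    (hω' : ω ∈ prefixCylinder m') (hle : m.length ≤ m'.length) :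
    prefixCylinder m' ⊆ prefixCylinder m := fun x hx k => by
  have hk : (k : ℕ) < m'.length := k.2.trans_le hle
  rw [hx ⟨k, hk⟩, ← hω' ⟨k, hk⟩, hω k]

lemma isPiSystem_prefixCylinders : IsPiSystem (Set.range (prefixCylinder (N := N))) := by
  rintro _ ⟨m, rfl⟩ _ ⟨m', rfl⟩ ⟨ω, hω, hω'⟩
  rcases le_total m.length m'.length with hle | hle
  · exact ⟨m', (Set.inter_eq_right.mpr (prefixCylinder_subset hω hω' hle)).symm⟩
  · exact ⟨m, (Set.inter_eq_left.mpr (prefixCylinder_subset hω' hω hle)).symm⟩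

lemma setOf_apply_eq_eq_iUnion (n : ℕ) (j : Fin N) :
    {ω : ℕ → Fin N | ω n = j} =
      ⋃ (m : List (Fin N)) (_ : ∃ h : n < m.length, m[n] = j), prefixCylinder m := by
  ext ω
  simp only [Set.mem_ofPred_eq, Set.mem_iUnion]
  constructor
  · rintro rfl
    exact ⟨List.ofFn fun k : Fin (n + 1) => ω k, ⟨by simp, List.getElem_ofFn ..⟩,
      fun k => by simp only [List.get_ofFn, Fin.val_cast]⟩
  · rintro ⟨m, ⟨hn, rfl⟩, hω⟩
    exact hω ⟨n, hn⟩

lemma pi_eq_generateFrom_prefixCylinders :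
    (MeasurableSpace.pi : MeasurableSpace (ℕ → Fin N)) =
      MeasurableSpace.generateFrom (Set.range prefixCylinder) := by
  refine le_antisymm (iSup_le fun n => measurable_iff_comap_le.mp ?_)
    (MeasurableSpace.generateFrom_le fun _ ⟨m, hm⟩ => hm ▸ measurableSet_prefixCylinder m)
  refine @measurable_to_countable' (Fin N) _ _ _ (.generateFrom _) _ fun j => ?_
  rw [show (fun ω : ℕ → Fin N => ω n) ⁻¹' {j} = {ω | ω n = j} from rfl, setOf_apply_eq_eq_iUnion]
  exact .iUnion fun m => .iUnion fun _ => MeasurableSpace.measurableSet_generateFrom ⟨m, rfl⟩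

lemma prefixCylinder_cons_inter_singleton (j a : Fin N) (m : List (Fin N)) :
    prefixCylinder (a :: m) ∩ prefixCylinder [j] =
      if j = a then prefixCylinder (a :: m) else ∅ := by
  ext ω
  split_ifs with h
  · subst h
    simp +contextual [mem_prefixCylinder_cons]
  · simp only [Set.mem_inter_iff, mem_prefixCylinder_cons, Set.mem_empty_iff_false, iff_false]
    rintro ⟨⟨rfl, -⟩, hj, -⟩
    exact h hj.symm

section UniformBernoulli

variable (P : Measure (ℕ → Fin N)) [IsProbabilityMeasure P] (hN : N ≠ 0)
  (hP : ∀ m : List (Fin N), P (prefixCylinder m) = (N : ℝ≥0∞)⁻¹ ^ m.length)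
include hN hP

lemma map_prependShift (j : Fin N) :
    P.map (prependShift j) = (N : ℝ≥0∞) • P.restrict (prefixCylinder [j]) := by
  have hN_inv : (N : ℝ≥0∞) * (N : ℝ≥0∞)⁻¹ = 1 :=
    ENNReal.mul_inv_cancel (by exact_mod_cast hN) (natCast_ne_top N)
  have := Measure.isProbabilityMeasure_map (μ := P) (measurable_prependShift j).aemeasurable
  refine ext_of_generate_finite _ pi_eq_generateFrom_prefixCylinders
    isPiSystem_prefixCylinders ?_ ?_
  · rintro _ ⟨m, rfl⟩
    rw [Measure.map_apply (measurable_prependShift j) (measurableSet_prefixCylinder m),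
      Measure.smul_apply, Measure.restrict_apply (measurableSet_prefixCylinder m), smul_eq_mul]
    cases m with
    | nil => simp [hP, hN_inv]
    | cons a m =>
      rw [preimage_prependShift_prefixCylinder_cons, prefixCylinder_cons_inter_singleton]
      split_ifs
      · rw [hP, hP, List.length_cons, pow_succ', ← mul_assoc, hN_inv, one_mul]
      · simp
  · simp [hP, hN_inv]

lemma map_restrict_prefixCylinder_prependShift (j : Fin N) (m : List (Fin N)) :
    (P.restrict (prefixCylinder m)).map (prependShift j) =
      (N : ℝ≥0∞) • P.restrict (prefixCylinder (j :: m)) := by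
  ext B hB
  have hBj : MeasurableSet (B ∩ prefixCylinder (j :: m)) :=
    hB.inter (measurableSet_prefixCylinder _)
  have hpre : prependShift j ⁻¹' B ∩ prefixCylinder m =
      prependShift j ⁻¹' (B ∩ prefixCylinder (j :: m)) := by
    rw [Set.preimage_inter, preimage_prependShift_prefixCylinder_cons, if_pos rfl]
  rw [Measure.map_apply (measurable_prependShift j) hB,
    Measure.restrict_apply (measurable_prependShift j hB), hpre,
    ← Measure.map_apply (measurable_prependShift j) hBj, map_prependShift P hN hP,
    Measure.smul_apply, Measure.restrict_apply hBj, Set.inter_assoc,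
    prefixCylinder_cons_inter_singleton, if_pos rfl, Measure.smul_apply,
    Measure.restrict_apply hB]

lemma map_prependWord (m : List (Fin N)) :
    P.map (prependWord m) = (N : ℝ≥0∞) ^ m.length • P.restrict (prefixCylinder m) := by
  induction m with
  | nil =>
    rw [List.length_nil, pow_zero, one_smul, prefixCylinder_nil, Measure.restrict_univ]
    exact Measure.map_id'
  | cons a m ih =>
    rw [show prependWord (a :: m) = prependShift a ∘ prependWord m from rfl,
      ← Measure.map_map (measurable_prependShift a) (measurable_prependWord m), ih,
      Measure.map_smul, map_restrict_prefixCylinder_prependShift P hN hP, smul_smul,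
      List.length_cons, pow_succ]

lemma quasiMeasurePreserving_prependWord (m : List (Fin N)) :
    Measure.QuasiMeasurePreserving (prependWord m) P P :=
  ⟨measurable_prependWord m, by
    rw [map_prependWord P hN hP]
    exact Measure.absolutelyContinuous_restrict.smul_left _⟩

lemma integral_comp_prependWord {g : (ℕ → Fin N) → ℝ} (hg : AEStronglyMeasurable g P)
    (m : List (Fin N)) :
    ∫ ω, g (prependWord m ω) ∂P = (N : ℝ) ^ m.length * ∫ ω in prefixCylinder m, g ω ∂P := by
  rw [← integral_map (measurable_prependWord m).aemeasurable
      (hg.mono_ac (quasiMeasurePreserving_prependWord P hN hP m).absolutelyContinuous),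
    map_prependWord P hN hP, integral_smul_measure, smul_eq_mul, ENNReal.toReal_pow,
    ENNReal.toReal_natCast]

variable {T : Fin N → Lp ℝ 2 P →L[ℝ] Lp ℝ 2 P}
  (hT : ∀ (i : Fin N) (ψ : Lp ℝ 2 P),
    (T i ψ : (ℕ → Fin N) → ℝ) =ᵐ[P] fun ω => (Real.sqrt N)⁻¹ * ψ (prependShift i ω))
include hT

lemma coeFn_prod_reverse_map (l : List (Fin N)) (φ : Lp ℝ 2 P) :
    ⇑((l.map T).reverse.prod φ) =ᵐ[P]
      fun ω => (Real.sqrt N)⁻¹ ^ l.length * φ (prependWord l ω) := by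
  induction l generalizing φ with
  | nil => simp [prependWord]
  | cons a l ih =>
    rw [List.map_cons, List.reverse_cons, List.prod_append, List.prod_singleton,
      mul_apply_eq_comp]
    filter_upwards [ih (T a φ),
      (quasiMeasurePreserving_prependWord P hN hP l).ae_eq_comp (hT a φ)] with ω h₁ h₂
    rw [h₁, show T a φ (prependWord l ω) = _ from h₂, List.length_cons, pow_succ, mul_assoc]
    rfl

lemma integral_prod_reverse_map (l : List (Fin N)) (φ : Lp ℝ 2 P) :
    ∫ ω, (l.map T).reverse.prod φ ω ∂P =
      Real.sqrt N ^ l.length * ∫ ω in prefixCylinder l, φ ω ∂P := by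
  rw [integral_congr_ae (coeFn_prod_reverse_map P hN hP hT l φ), integral_const_mul,
    integral_comp_prependWord P hN hP (Lp.aestronglyMeasurable φ), ← mul_assoc,
    ← mul_pow, inv_mul_eq_div, Real.div_sqrt]

lemma eq_zero_of_forall_integral_prod_reverse_map_eq_zero {ψ : Lp ℝ 2 P}
    (h : ∀ l : List (Fin N), ∫ ω, (l.map T).reverse.prod ψ ω ∂P = 0) : ψ = 0 := by
  have h_cyl : ∀ l : List (Fin N), ∫ ω in prefixCylinder l, ψ ω ∂P = 0 := fun l => by
    have hN' : Real.sqrt N ≠ 0 := by positivity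
    simpa [integral_prod_reverse_map P hN hP hT, hN'] using h l
  refine Lp.ext ((ae_eq_zero_of_forall_setIntegral_eq_zero_of_isPiSystem
    pi_eq_generateFrom_prefixCylinders isPiSystem_prefixCylinders
    ((Lp.memLp ψ).integrable one_le_two) ?_ ?_).trans (Lp.coeFn_zero ..).symm)
  · simpa using h_cyl []
  · rintro _ ⟨l, rfl⟩
    exact h_cyl l

end UniformBernoulli

end SymbolicDilation

open SymbolicDilation in
theorem stmt19_general {Y : Type*} [MetricSpace Y]
    [MeasurableSpace Y] [BorelSpace Y]
    (N : ℕ) (hN : 2 ≤ N) (τ : Fin N → Y → Y)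
    (P : Measure (ℕ → Fin N)) [IsProbabilityMeasure P]
    (hP : ∀ (n : ℕ) (w : Fin n → Fin N),
      P {ω | ∀ k : Fin n, ω k = w k} = ((N : ℝ≥0∞)⁻¹) ^ n)
    (π : (ℕ → Fin N) → Y) (hπcont : Continuous π)
    (hπeq : ∀ j : Fin N, π ∘ prependShift j = τ j ∘ π)
    (μ : Measure Y) (hμ : μ = P.map π)
    (F : Fin N → (Lp ℝ 2 μ →L[ℝ] Lp ℝ 2 μ))
    (hF : ∀ (i : Fin N) (f : Lp ℝ 2 μ),
      (F i f : Y → ℝ) =ᵐ[μ] fun y => (Real.sqrt N)⁻¹ * f (τ i y))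
    (T : Fin N → (Lp ℝ 2 P →L[ℝ] Lp ℝ 2 P))
    (hT : ∀ (i : Fin N) (ψ : Lp ℝ 2 P),
      (T i ψ : (ℕ → Fin N) → ℝ) =ᵐ[P] fun ω => (Real.sqrt N)⁻¹ * ψ (prependShift i ω))
    (V : Lp ℝ 2 μ →ₗ[ℝ] Lp ℝ 2 P)
    (hV : ∀ f : Lp ℝ 2 μ, (V f : (ℕ → Fin N) → ℝ) =ᵐ[P] fun ω => f (π ω)) :
    (∀ f : Lp ℝ 2 μ, ‖V f‖ = ‖f‖) ∧
    (∀ (i : Fin N) (f : Lp ℝ 2 μ), V (F i f) = T i (V f)) ∧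
    (Submodule.span ℝ {ψ : Lp ℝ 2 P | ∃ (n : ℕ) (w : Fin n → Fin N) (f : Lp ℝ 2 μ),
        ψ = (List.ofFn fun j => ContinuousLinearMap.adjoint (T (w j))).prod
              (V f)}).topologicalClosure = ⊤ := by
  subst hμ
  have hN₀ : N ≠ 0 := by omega
  have hP' (m : List (Fin N)) : P (prefixCylinder m) = (N : ℝ≥0∞)⁻¹ ^ m.length := hP _ m.get
  have hπ : AEMeasurable π P := hπcont.measurable.aemeasurable
  refine ⟨fun f => Lp.norm_eq_of_ae_eq_comp hπ (hV f), fun i f => Lp.ext ?_, ?_⟩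
  · filter_upwards [hV (F i f), ae_of_ae_map hπ (hF i f), hT i (V f),
      (quasiMeasurePreserving_prependWord P hN₀ hP' [i]).ae_eq_comp (hV f)] with ω h₁ h₂ h₃ h₄
    rw [h₁, h₂, h₃, show V f (prependShift i ω) = f (π (prependShift i ω)) from h₄,
      ← Function.comp_apply (f := π), hπeq i, Function.comp_apply]
  · rw [Submodule.topologicalClosure_eq_top_iff, Submodule.eq_bot_iff]
    intro ψ hψ
    refine eq_zero_of_forall_integral_prod_reverse_map_eq_zero P hN₀ hP' hT fun l => ?_
    let one : Lp ℝ 2 (P.map π) := Lp.const 2 (P.map π) 1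
    have hV_one : V one = Lp.const 2 P 1 := by
      refine Lp.ext ?_
      filter_upwards [hV one, ae_of_ae_map hπ (Lp.coeFn_const 2 (P.map π) (1 : ℝ)),
        Lp.coeFn_const 2 P (1 : ℝ)] with ω h₁ h₂ h₃
      rw [h₁, h₂, h₃]
      rfl
    have h_gen : inner ℝ (((l.map T).map adjoint).prod (V one)) ψ = 0 :=
      (Submodule.mem_orthogonal _ ψ).mp hψ _ <| Submodule.subset_span ⟨l.length, l.get, one, by
        rw [List.map_map, ← List.ofFn_getElem_eq_map]; rfl⟩
    rwa [inner_prod_map_adjoint, hV_one, ← indicatorConstLp_univ, L2.inner_indicatorConstLp_one,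
      setIntegral_univ] at h_gen

/-- **Minimal isometric dilation.** Let `(τᵢ)` be a contractive IFS on a
nonempty complete metric space `Y`, `P` the Bernoulli(1/N) product measure on
`Ω = {1,…,N}^ℕ`, `π : Ω → Y` the encoding map, and `μ = P∘π⁻¹`. With
`Fᵢf = (1/√N) f∘τᵢ` on `L²(μ)`, `Tᵢψ = (1/√N) ψ∘σᵢ` on `L²(Ω,P)`, `Sᵢ = Tᵢ*`, and
`Vf = f∘π`, one has: (a) `V` is isometric; (b) `V Fᵢ = Sᵢ* V = Tᵢ V`; (c) the closed
linear span of `⋃_n ⋃_{(i₁,…,i_n)} S_{i₁}⋯S_{i_n} V L²(μ)` is all of `L²(Ω,P)`. -/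
theorem stmt19 {Y : Type*} [MetricSpace Y] [CompleteSpace Y] [Nonempty Y]
    [MeasurableSpace Y] [BorelSpace Y]
    (N : ℕ) (hN : 2 ≤ N) (τ : Fin N → Y → Y) (c : Fin N → ℝ)
    (hc : ∀ i, c i ∈ Set.Ioo (0 : ℝ) 1)
    (hτ : ∀ i x y, dist (τ i x) (τ i y) ≤ c i * dist x y)
    (P : Measure (ℕ → Fin N)) [IsProbabilityMeasure P]
    (hP : ∀ (n : ℕ) (w : Fin n → Fin N),
      P {ω | ∀ k : Fin n, ω k = w k} = ((N : ℝ≥0∞)⁻¹) ^ n)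
    (π : (ℕ → Fin N) → Y) (hπcont : Continuous π)
    (hπeq : ∀ j : Fin N, π ∘ prependShift j = τ j ∘ π)
    (μ : Measure Y) (hμ : μ = P.map π)
    (F : Fin N → (Lp ℝ 2 μ →L[ℝ] Lp ℝ 2 μ))
    (hF : ∀ (i : Fin N) (f : Lp ℝ 2 μ),
      (F i f : Y → ℝ) =ᵐ[μ] fun y => (Real.sqrt N)⁻¹ * f (τ i y))
    (T : Fin N → (Lp ℝ 2 P →L[ℝ] Lp ℝ 2 P))
    (hT : ∀ (i : Fin N) (ψ : Lp ℝ 2 P),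
      (T i ψ : (ℕ → Fin N) → ℝ) =ᵐ[P] fun ω => (Real.sqrt N)⁻¹ * ψ (prependShift i ω))
    (V : Lp ℝ 2 μ →ₗ[ℝ] Lp ℝ 2 P)
    (hV : ∀ f : Lp ℝ 2 μ, (V f : (ℕ → Fin N) → ℝ) =ᵐ[P] fun ω => f (π ω)) :
    (∀ f : Lp ℝ 2 μ, ‖V f‖ = ‖f‖) ∧
    (∀ (i : Fin N) (f : Lp ℝ 2 μ), V (F i f) = T i (V f)) ∧
    (Submodule.span ℝ {ψ : Lp ℝ 2 P | ∃ (n : ℕ) (w : Fin n → Fin N) (f : Lp ℝ 2 μ),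
        ψ = (List.ofFn fun j => ContinuousLinearMap.adjoint (T (w j))).prod
              (V f)}).topologicalClosure = ⊤ :=
  stmt19_general N hN τ P hP π hπcont hπeq μ hμ F hF T hT V hV
end
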